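/- Let $T$ be a $C_2$ tableau with $A(T)>B(T)+1$, $e_1T\ne0$, and $e_2T\ne0$. Then $e_1e_2T=e_2e_1T\ne0$. -/

import Mathlib

/-! The `C₂` alphabet `1 < 2 < 2̄ < 1̄`, encoded as the integers `1, 2, -2, -1`. -/

/-- Position of a letter of the `C₂` alphabet: `1 ↦ 1`, `2 ↦ 2`, `2̄ ↦ 3`, `1̄ ↦ 4`. -/
def cpos (x : ℤ) : ℤ := if 0 < x then x else 5 + x

/-- A `C₂` tableau on a two-row Young diagram with row lengths `p ≥ q`:
rows weakly increase, columns strictly increase, no column contains both `1` and `1̄`,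
and no configuration with `2` in the top row of a column and `2̄` in the bottom row of
a weakly later column. -/
structure C2Tab (p q : ℕ) where
  hq : q ≤ p
  top : ℕ → ℤ
  bot : ℕ → ℤ
  htop : ∀ i < p, top i = 1 ∨ top i = 2 ∨ top i = -2 ∨ top i = -1
  hbot : ∀ i < q, bot i = 1 ∨ bot i = 2 ∨ bot i = -2 ∨ bot i = -1
  row_top : ∀ i j, i ≤ j → j < p → cpos (top i) ≤ cpos (top j)
  row_bot : ∀ i j, i ≤ j → j < q → cpos (bot i) ≤ cpos (bot j)
  col_strict : ∀ i < q, cpos (top i) < cpos (bot i)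
  no_one_barone : ∀ i < q, ¬ (top i = 1 ∧ bot i = -1)
  no_config : ∀ i j, i ≤ j → j < q → ¬ (top i = 2 ∧ bot j = -2)

/-- The column word of a `C₂` tableau: for each two-row column, bottom then top entry,
left to right, followed by the one-row entries left to right (length `p + q`). -/
def cword {p q : ℕ} (T : C2Tab p q) (m : ℕ) : ℤ :=
  if m < 2 * q then (if m % 2 = 0 then T.bot (m / 2) else T.top (m / 2)) else T.top (m - q)

/-- The `i`-signature of a letter (colors `i : Fin 2`, with `0` for color 1 and `1` for
color 2): for color 1, `2, 1̄ ↦ +` and `1, 2̄ ↦ −`; for color 2, `2̄ ↦ +`, `2 ↦ −`,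
`1, 1̄ ↦ ∗` (recorded as `0`). -/
def csig (i : Fin 2) (x : ℤ) : ℤ :=
  if i = 0 then (if x = 2 ∨ x = -1 then 1 else -1)
  else (if x = -2 then 1 else if x = 2 then -1 else 0)

def plusCount {p q : ℕ} (T : C2Tab p q) (i : Fin 2) (a b : ℕ) : ℕ :=
  ((Finset.Ico a b).filter (fun m => csig i (cword T m) = 1)).card

def minusCount {p q : ℕ} (T : C2Tab p q) (i : Fin 2) (a b : ℕ) : ℕ :=
  ((Finset.Ico a b).filter (fun m => csig i (cword T m) = -1)).card

/-- Position `m` of the column word carries a `+` of the `i`-signature surviving the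
reduction (removal of `+ ∗⋯∗ −` factors). -/
def unmatchedPlus {p q : ℕ} (T : C2Tab p q) (i : Fin 2) (m : ℕ) : Prop :=
  m < p + q ∧ csig i (cword T m) = 1 ∧
  ∀ j, m < j → j < p + q → minusCount T i (m + 1) (j + 1) ≤ plusCount T i (m + 1) (j + 1)

/-- The Kashiwara operator `e_i` acts at position `m`: the leftmost `+` of the reduced
`i`-signature. -/
def actsAt {p q : ℕ} (T : C2Tab p q) (i : Fin 2) (m : ℕ) : Prop :=
  unmatchedPlus T i m ∧ ∀ m' < m, csig i (cword T m') = 1 → ¬ unmatchedPlus T i m'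

/-- The raised value of a letter: `e_1` sends `2 ↦ 1`, `1̄ ↦ 2̄`; `e_2` sends `2̄ ↦ 2`. -/
def raiseLetter (i : Fin 2) (x : ℤ) : ℤ := if i = 0 then (if x = 2 then 1 else -2) else 2

/-- `e_i T = T'` (in particular `e_i T ≠ 0`). -/
def eRel {p q : ℕ} (i : Fin 2) (T T' : C2Tab p q) : Prop :=
  ∃ m, actsAt T i m ∧ cword T' m = raiseLetter i (cword T m) ∧
    ∀ m', m' < p + q → m' ≠ m → cword T' m' = cword T m'

/-- `A(T)` = number of `2̄`'s in the top row. -/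
def Astat {p q : ℕ} (T : C2Tab p q) : ℕ :=
  ((Finset.range p).filter (fun i => T.top i = -2)).card

/-- `B(T)` = number of `2`'s in the top row plus number of `1̄`'s in the bottom row. -/
def Bstat {p q : ℕ} (T : C2Tab p q) : ℕ :=
  ((Finset.range p).filter (fun i => T.top i = 2)).card +
  ((Finset.range q).filter (fun i => T.bot i = -1)).card

/-- `C(T)` = number of `2`'s in the top row. -/
def Cstat {p q : ℕ} (T : C2Tab p q) : ℕ :=
  ((Finset.range p).filter (fun i => T.top i = 2)).card

/-- `D(T)` = number of `2̄`'s in the bottom row. -/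
def Dstat {p q : ℕ} (T : C2Tab p q) : ℕ :=
  ((Finset.range q).filter (fun i => T.bot i = -2)).card


/-!
When `A(T) ≥ B(T)`, every `+` of the `1`-signature other than a `1̄` of the top row is cancelled
before the block of `1̄`'s ending the top row: a `2` in the bottom row by the `1` above it, and from
a `2` in the top row or a `1̄` in the bottom row onwards, the `−`'s of the `2̄`'s in the top row
outnumber the remaining `2`'s of the top row and `1̄`'s of the bottom row. Hence `e₁` acts on the
first `1̄` of the top row. Applying `e₂` turns one `2̄` into a `2`, changing `(A, B)` by at most
`(-1, +1)`, so `A > B + 1` keeps `e₁` acting on the same `1̄` after `e₂`. Conversely `e₁` turns that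
`1̄` (an `e₂`-sign `∗`) into a `2̄` (a `+`) to the right of the letter `e₂` acts on, which does not
move `e₂`. Both composites therefore change the same two letters.
-/

open Finset

lemma csig_le_one (i : Fin 2) (x : ℤ) : csig i x ≤ 1 := by
  unfold csig; split_ifs <;> norm_num

lemma neg_one_le_csig (i : Fin 2) (x : ℤ) : -1 ≤ csig i x := by
  unfold csig; split_ifs <;> norm_num

lemma eq_of_csig_zero_eq_one {x : ℤ} (h : csig 0 x = 1) : x = 2 ∨ x = -1 := by
  by_contra hx
  simp [csig, hx] at h

lemma eq_of_csig_one_eq_one {x : ℤ} (h : csig 1 x = 1) : x = -2 := by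
  by_contra hx
  unfold csig at h
  split_ifs at h <;> simp_all

lemma raiseLetter_one (x : ℤ) : raiseLetter 1 x = 2 := by
  simp [raiseLetter]

namespace C2Tab

variable {p q : ℕ} (T : C2Tab p q)

lemma top_ne_barOne_of_lt {i : ℕ} (hi : i < q) : T.top i ≠ -1 := by
  intro h
  have := T.col_strict i hi
  rcases T.hbot i hi with h' | h' | h' | h' <;> simp [h, h', cpos] at this

lemma top_eq_barOne_of_le {i j : ℕ} (hij : i ≤ j) (hj : j < p) (hi : T.top i = -1) :
    T.top j = -1 := by
  have := T.row_top i j hij hj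
  rcases T.htop j hj with h | h | h | h <;> simp [hi, h, cpos] at this ⊢

lemma bot_eq_barOne_of_le {i j : ℕ} (hij : i ≤ j) (hj : j < q) (hi : T.bot i = -1) :
    T.bot j = -1 := by
  have := T.row_bot i j hij hj
  rcases T.hbot j hj with h | h | h | h <;> simp [hi, h, cpos] at this ⊢

lemma top_eq_one_of_bot_eq_two {i : ℕ} (hi : i < q) (hb : T.bot i = 2) : T.top i = 1 := by
  have := T.col_strict i hi
  rcases T.htop i (hi.trans_le T.hq) with h | h | h | h <;> simp [hb, h, cpos] at this ⊢

lemma top_of_bot_eq_barOne {i : ℕ} (hi : i < q) (hb : T.bot i = -1) :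
    T.top i = 2 ∨ T.top i = -2 := by
  have := T.col_strict i hi
  have := T.no_one_barone i hi
  rcases T.htop i (hi.trans_le T.hq) with h | h | h | h <;> simp_all [cpos]

lemma bot_eq_barOne_of_top_eq_barTwo {i : ℕ} (hi : i < q) (ht : T.top i = -2) :
    T.bot i = -1 := by
  have := T.col_strict i hi
  rcases T.hbot i hi with h | h | h | h <;> simp [ht, h, cpos] at this ⊢

lemma lt_of_top_eq_two_of_top_eq_barTwo {i j : ℕ} (hip : i < p) (hi : T.top i = 2)
    (hj : T.top j = -2) : i < j := by
  by_contra! hji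
  have := T.row_top j i hji hip
  simp [hi, hj, cpos] at this

end C2Tab

section Positions

variable {p q : ℕ}

/-- Position of the top-row entry of column `i` in the column word. -/
def topPos (q i : ℕ) : ℕ := if i < q then 2 * i + 1 else q + i

lemma topPos_strictMono : StrictMono (topPos q) := by
  intro i j hij
  unfold topPos
  split_ifs <;> omega

lemma topPos_of_lt {i : ℕ} (hi : i < q) : topPos q i = 2 * i + 1 := by
  simp [topPos, hi]

lemma topPos_of_le {i : ℕ} (hi : q ≤ i) : topPos q i = q + i := by
  simp [topPos, hi.not_gt]

lemma lt_of_topPos_lt_two_mul {i j : ℕ} (hj : j < q) (h : topPos q i < 2 * j) : i < j := by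
  unfold topPos at h; split_ifs at h <;> omega

lemma topPos_lt_add {i : ℕ} (hq : q ≤ p) (hi : i < p) : topPos q i < p + q := by
  unfold topPos; split_ifs <;> omega

lemma cword_two_mul (T : C2Tab p q) {i : ℕ} (hi : i < q) : cword T (2 * i) = T.bot i := by
  simp [cword, hi]

lemma cword_topPos (T : C2Tab p q) (i : ℕ) : cword T (topPos q i) = T.top i := by
  unfold cword topPos
  split_ifs <;> first | omega | (congr 1; omega)

lemma exists_eq_two_mul_or_eq_topPos (hq : q ≤ p) {m : ℕ} (hm : m < p + q) :
    (∃ i < q, m = 2 * i) ∨ (∃ i < p, m = topPos q i) := by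
  by_cases h : m < 2 * q ∧ m % 2 = 0
  · exact Or.inl ⟨m / 2, by omega, by omega⟩
  · refine Or.inr ⟨if m < 2 * q then m / 2 else m - q, by split_ifs <;> omega, ?_⟩
    unfold topPos
    split_ifs <;> omega

end Positions

section Counting

variable {p q : ℕ}

lemma card_filter_Ico_add (P : ℕ → Prop) [DecidablePred P] {a b c : ℕ} (hab : a ≤ b)
    (hbc : b ≤ c) : #{m ∈ Ico a b | P m} + #{m ∈ Ico b c | P m} = #{m ∈ Ico a c | P m} := by
  rw [← Ico_union_Ico_eq_Ico hab hbc, filter_union,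
    card_union_of_disjoint (disjoint_filter_filter (Ico_disjoint_Ico_consecutive a b c))]

lemma card_filter_range_le_add_one {n c : ℕ} {f g : ℕ → ℤ} (x : ℤ)
    (h : ∀ j < n, j ≠ c → f j = g j) :
    #{j ∈ range n | f j = x} ≤ #{j ∈ range n | g j = x} + 1 := by
  refine (card_le_card fun j hj => ?_).trans (card_insert_le c _)
  simp only [mem_filter, mem_range, mem_insert] at hj ⊢
  by_cases hjc : j = c
  · exact Or.inl hjc
  · exact Or.inr ⟨hj.1, h j hj.1 hjc ▸ hj.2⟩

variable (T : C2Tab p q) (i : Fin 2)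

lemma minusCount_add {a b c : ℕ} (hab : a ≤ b) (hbc : b ≤ c) :
    minusCount T i a b + minusCount T i b c = minusCount T i a c :=
  card_filter_Ico_add _ hab hbc

lemma plusCount_add {a b c : ℕ} (hab : a ≤ b) (hbc : b ≤ c) :
    plusCount T i a b + plusCount T i b c = plusCount T i a c :=
  card_filter_Ico_add _ hab hbc

lemma minusCount_eq_zero_of_le {a b : ℕ} (h : b ≤ a) : minusCount T i a b = 0 := by
  simp [minusCount, Ico_eq_empty_of_le h]

lemma minusCount_single (a : ℕ) :
    minusCount T i a (a + 1) = if csig i (cword T a) = -1 then 1 else 0 := by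
  simp only [minusCount, Nat.Ico_succ_singleton, filter_singleton]
  split_ifs <;> rfl

lemma plusCount_single (a : ℕ) :
    plusCount T i a (a + 1) = if csig i (cword T a) = 1 then 1 else 0 := by
  simp only [plusCount, Nat.Ico_succ_singleton, filter_singleton]
  split_ifs <;> rfl

variable {T i} {T' : C2Tab p q} {a b : ℕ}

lemma minusCount_congr (h : ∀ m ∈ Ico a b, cword T' m = cword T m) :
    minusCount T' i a b = minusCount T i a b := by
  unfold minusCount
  congr 1
  exact filter_congr fun m hm => by rw [h m hm]

lemma plusCount_congr (h : ∀ m ∈ Ico a b, cword T' m = cword T m) :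
    plusCount T' i a b = plusCount T i a b := by
  unfold plusCount
  congr 1
  exact filter_congr fun m hm => by rw [h m hm]

lemma minusCount_le_of_csig_le
    (h : ∀ m ∈ Ico a b, csig i (cword T m) ≤ csig i (cword T' m)) :
    minusCount T' i a b ≤ minusCount T i a b := by
  refine card_le_card fun m hm => ?_
  simp only [mem_filter] at hm ⊢
  exact ⟨hm.1, le_antisymm (hm.2 ▸ h m hm.1) (neg_one_le_csig i _)⟩

lemma plusCount_le_of_csig_le
    (h : ∀ m ∈ Ico a b, csig i (cword T m) ≤ csig i (cword T' m)) :
    plusCount T i a b ≤ plusCount T' i a b := by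
  refine card_le_card fun m hm => ?_
  simp only [mem_filter] at hm ⊢
  exact ⟨hm.1, le_antisymm (csig_le_one i _) (hm.2 ▸ h m hm.1)⟩

variable (T i a b)

lemma card_top_le_minusCount :
    #{j ∈ range p | a ≤ topPos q j ∧ topPos q j < b ∧ csig i (T.top j) = -1}
      ≤ minusCount T i a b := by
  rw [← card_image_of_injective _ topPos_strictMono.injective]
  refine card_le_card fun m hm => ?_
  obtain ⟨j, hj, rfl⟩ := mem_image.1 hm
  simp only [mem_filter, mem_range] at hj
  simp only [mem_filter, mem_Ico]
  exact ⟨⟨hj.2.1, hj.2.2.1⟩, by rw [cword_topPos]; exact hj.2.2.2⟩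

lemma plusCount_le_card_top_add_card_bot (hb : b ≤ p + q) :
    plusCount T i a b ≤
      #{j ∈ range p | a ≤ topPos q j ∧ topPos q j < b ∧ csig i (T.top j) = 1} +
      #{j ∈ range q | a ≤ 2 * j ∧ 2 * j < b ∧ csig i (T.bot j) = 1} := by
  refine (card_le_card fun m hm => ?_).trans <| (card_union_le _ _).trans <|
    add_le_add (card_image_le (f := topPos q)) (card_image_le (f := (2 * ·)))
  simp only [mem_filter, mem_Ico] at hm
  obtain ⟨⟨ham, hmb⟩, hsig⟩ := hm
  simp only [mem_union, mem_image, mem_filter, mem_range]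
  rcases exists_eq_two_mul_or_eq_topPos T.hq (m := m) (by omega) with
    ⟨j, hj, rfl⟩ | ⟨j, hj, rfl⟩
  · exact Or.inr ⟨j, ⟨hj, ham, hmb, by rwa [cword_two_mul T hj] at hsig⟩, rfl⟩
  · exact Or.inl ⟨j, ⟨hj, ham, hmb, by rwa [cword_topPos] at hsig⟩, rfl⟩

end Counting

section Signature

variable {p q : ℕ} {T : C2Tab p q} {i : Fin 2}

lemma not_unmatchedPlus_of_lt {m e : ℕ} (he : e ≤ p + q)
    (h : plusCount T i (m + 1) e < minusCount T i (m + 1) e) : ¬ unmatchedPlus T i m := by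
  rintro ⟨-, -, hbal⟩
  have hme : m + 1 < e := by
    by_contra! hem
    rw [minusCount_eq_zero_of_le T i hem] at h
    omega
  have := hbal (e - 1) (by omega) (by omega)
  rw [Nat.sub_add_cancel (by omega)] at this
  omega

lemma exists_lt_of_not_unmatchedPlus {m m' : ℕ} (hm : unmatchedPlus T i m) (hm' : m' < m)
    (hplus : csig i (cword T m') = 1) (hnot : ¬ unmatchedPlus T i m') :
    ∃ j, m' < j ∧ j < m ∧ plusCount T i (m' + 1) (j + 1) < minusCount T i (m' + 1) (j + 1) := by
  obtain ⟨hm, hsig, hbal⟩ := hm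
  simp only [unmatchedPlus, not_and, not_forall, not_le, exists_prop] at hnot
  obtain ⟨j, hm'j, hj, hlt⟩ := hnot (by omega) hplus
  rcases lt_or_ge j m with hjm | hmj
  · exact ⟨j, hm'j, hjm, hlt⟩
  have hright : minusCount T i (m + 1) (j + 1) ≤ plusCount T i (m + 1) (j + 1) := by
    rcases hmj.eq_or_lt with rfl | hmj
    · simp [minusCount_eq_zero_of_le]
    · exact hbal j hmj hj
  have := minusCount_add T i (show m' + 1 ≤ m by omega) (show m ≤ m + 1 by omega)
  have := plusCount_add T i (show m' + 1 ≤ m by omega) (show m ≤ m + 1 by omega)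
  have := minusCount_add T i (show m' + 1 ≤ m + 1 by omega) (show m + 1 ≤ j + 1 by omega)
  have := plusCount_add T i (show m' + 1 ≤ m + 1 by omega) (show m + 1 ≤ j + 1 by omega)
  have hminus_m : minusCount T i m (m + 1) = 0 := by simp [minusCount_single, hsig]
  have hplus_m : plusCount T i m (m + 1) = 1 := by simp [plusCount_single, hsig]
  have hm'm : m' + 1 < m := by
    by_contra! h
    have := minusCount_eq_zero_of_le T i h
    omega
  refine ⟨m - 1, by omega, by omega, ?_⟩
  rw [Nat.sub_add_cancel (by omega)]
  omega

lemma actsAt_of_csig_le_right {T' : C2Tab p q} {m : ℕ} (h : actsAt T i m)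
    (hleft : ∀ m' ≤ m, cword T' m' = cword T m')
    (hright : ∀ m', m < m' → m' < p + q → csig i (cword T m') ≤ csig i (cword T' m')) :
    actsAt T' i m := by
  obtain ⟨⟨hm, hplus, hbal⟩, hfirst⟩ := h
  refine ⟨⟨hm, by rwa [hleft m le_rfl], fun j hmj hj => ?_⟩, fun m' hm' hplus' hun' => ?_⟩
  · have hsig : ∀ m'' ∈ Ico (m + 1) (j + 1), csig i (cword T m'') ≤ csig i (cword T' m'') :=
      fun m'' hm'' => hright m'' (by simp at hm''; omega) (by simp at hm''; omega)
    calc minusCount T' i (m + 1) (j + 1) ≤ minusCount T i (m + 1) (j + 1) :=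
          minusCount_le_of_csig_le hsig
      _ ≤ plusCount T i (m + 1) (j + 1) := hbal j hmj hj
      _ ≤ plusCount T' i (m + 1) (j + 1) := plusCount_le_of_csig_le hsig
  · rw [hleft m' hm'.le] at hplus'
    obtain ⟨j, hm'j, hjm, hlt⟩ :=
      exists_lt_of_not_unmatchedPlus ⟨hm, hplus, hbal⟩ hm' hplus' (hfirst m' hm' hplus')
    have heq : ∀ m'' ∈ Ico (m' + 1) (j + 1), cword T' m'' = cword T m'' :=
      fun m'' hm'' => hleft m'' (by simp at hm''; omega)
    have := hun'.2.2 j hm'j (by omega)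
    rw [minusCount_congr heq, plusCount_congr heq] at this
    omega

end Signature

namespace C2Tab

variable {p q : ℕ} {T : C2Tab p q}

structure IsBarOneCutoff (T : C2Tab p q) (k : ℕ) : Prop where
  q_le : q ≤ k
  le_p : k ≤ p
  top_eq_barOne_iff : ∀ j < p, T.top j = -1 ↔ k ≤ j

lemma exists_isBarOneCutoff (T : C2Tab p q) : ∃ k, T.IsBarOneCutoff k := by
  classical
  have hex : ∃ k, p ≤ k ∨ T.top k = -1 := ⟨p, Or.inl le_rfl⟩
  have hiff : ∀ j < p, T.top j = -1 ↔ Nat.find hex ≤ j := fun j hj =>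
    ⟨fun h => Nat.find_min' hex (Or.inr h), fun h => by
      rcases Nat.find_spec hex with h' | h'
      · omega
      · exact T.top_eq_barOne_of_le h hj h'⟩
  refine ⟨Nat.find hex, ?_, Nat.find_min' hex (Or.inl le_rfl), hiff⟩
  by_contra! hk
  exact T.top_ne_barOne_of_lt hk ((hiff _ (hk.trans_le T.hq)).2 le_rfl)

namespace IsBarOneCutoff

variable {k : ℕ}

lemma lt_of_top_ne_barOne (hk : T.IsBarOneCutoff k) {j : ℕ} (hj : j < p) (h : T.top j ≠ -1) :
    j < k := by
  by_contra! hkj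
  exact h ((hk.top_eq_barOne_iff j hj).2 hkj)

lemma top_ne_barOne_of_lt (hk : T.IsBarOneCutoff k) {j : ℕ} (hjk : j < k) : T.top j ≠ -1 :=
  fun h =>
    (((hk.top_eq_barOne_iff j (hjk.trans_le hk.le_p)).1 h).trans_lt hjk).false

lemma topPos_lt_iff (hk : T.IsBarOneCutoff k) {j : ℕ} : topPos q j < q + k ↔ j < k := by
  rw [← topPos_of_le hk.q_le]
  exact topPos_strictMono.lt_iff_lt

lemma cword_eq_barOne (hk : T.IsBarOneCutoff k) {m : ℕ} (hkm : q + k ≤ m) (hm : m < p + q) :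
    cword T m = -1 := by
  have := cword_topPos T (m - q)
  rw [topPos_of_le (by have := hk.q_le; omega), Nat.add_sub_cancel' (by omega)] at this
  rw [this, hk.top_eq_barOne_iff _ (by omega)]
  omega

lemma lt_of_cword_ne_barOne (hk : T.IsBarOneCutoff k) {m : ℕ} (hm : m < p + q)
    (h : cword T m ≠ -1) : m < q + k := by
  by_contra! hkm
  exact h (hk.cword_eq_barOne hkm hm)

end IsBarOneCutoff

end C2Tab

section FirstColor

variable {p q : ℕ} {T : C2Tab p q} {k : ℕ}

lemma not_unmatchedPlus_of_bot_eq_two {i : ℕ} (hi : i < q) (hb : T.bot i = 2) :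
    ¬ unmatchedPlus T 0 (2 * i) := by
  have htop : cword T (2 * i + 1) = 1 := by
    rw [← topPos_of_lt hi, cword_topPos, T.top_eq_one_of_bot_eq_two hi hb]
  apply not_unmatchedPlus_of_lt (e := 2 * i + 1 + 1) (by have := T.hq; omega)
  simp [minusCount_single, plusCount_single, htop, csig]

lemma not_unmatchedPlus_of_top_eq_two (hAB : Bstat T ≤ Astat T) (hk : T.IsBarOneCutoff k)
    {i : ℕ} (hi : i < p) (ht : T.top i = 2) : ¬ unmatchedPlus T 0 (topPos q i) := by
  apply not_unmatchedPlus_of_lt (e := q + k) (by have := hk.le_p; omega)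
  have hminus : Astat T ≤ minusCount T 0 (topPos q i + 1) (q + k) := by
    refine (card_le_card fun j hj => ?_).trans (card_top_le_minusCount T 0 _ _)
    simp only [mem_filter, mem_range] at hj ⊢
    refine ⟨hj.1, topPos_strictMono (T.lt_of_top_eq_two_of_top_eq_barTwo hi ht hj.2),
      hk.topPos_lt_iff.2 (hk.lt_of_top_ne_barOne hj.1 (by simp [hj.2])), by simp [hj.2, csig]⟩
  have htop : #{j ∈ range p | topPos q i + 1 ≤ topPos q j ∧ topPos q j < q + k ∧
      csig 0 (T.top j) = 1} < #{j ∈ range p | T.top j = 2} := by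
    refine card_lt_card ((ssubset_iff_of_subset fun j hj => ?_).2 ⟨i, by simp [hi, ht], ?_⟩)
    · simp only [mem_filter, mem_range] at hj ⊢
      refine ⟨hj.1, (eq_of_csig_zero_eq_one hj.2.2.2).resolve_right ?_⟩
      exact hk.top_ne_barOne_of_lt (hk.topPos_lt_iff.1 hj.2.2.1)
    · simp
  have hbot : #{j ∈ range q | topPos q i + 1 ≤ 2 * j ∧ 2 * j < q + k ∧
      csig 0 (T.bot j) = 1} ≤ #{j ∈ range q | T.bot j = -1} := by
    refine card_le_card fun j hj => ?_
    simp only [mem_filter, mem_range] at hj ⊢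
    refine ⟨hj.1, (eq_of_csig_zero_eq_one hj.2.2.2).resolve_left fun hb => ?_⟩
    have hij := lt_of_topPos_lt_two_mul (i := i) hj.1 (by omega)
    have := T.row_top i j hij.le (hj.1.trans_le T.hq)
    simp [ht, T.top_eq_one_of_bot_eq_two hj.1 hb, cpos] at this
  have := plusCount_le_card_top_add_card_bot T 0 (topPos q i + 1) (q + k)
    (by have := hk.le_p; omega)
  unfold Bstat at hAB
  omega

lemma not_unmatchedPlus_of_bot_eq_barOne (hAB : Bstat T ≤ Astat T) (hk : T.IsBarOneCutoff k)
    {i : ℕ} (hi : i < q) (hb : T.bot i = -1) : ¬ unmatchedPlus T 0 (2 * i) := by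
  have hik : i < k := hk.lt_of_top_ne_barOne (hi.trans_le T.hq) <| by
    rcases T.top_of_bot_eq_barOne hi hb with h | h <;> simp [h]
  apply not_unmatchedPlus_of_lt (e := q + k) (by have := hk.le_p; omega)
  unfold Astat Bstat at hAB
  set A := {j ∈ range p | T.top j = -2}
  set H := {j ∈ range q | T.bot j = -1}
  -- a `2̄` in the top row left of column `i` sits above a `1̄` left of column `i`
  have hA_left : #(A.filter (· < i)) ≤ #(H.filter (· < i)) := by
    refine card_le_card fun j hj => ?_
    simp only [A, H, mem_filter, mem_range] at hj ⊢
    exact ⟨⟨by omega, T.bot_eq_barOne_of_top_eq_barTwo (by omega) hj.1.2⟩, hj.2⟩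
  have hA_right : #(A.filter (¬ · < i)) ≤ minusCount T 0 (2 * i + 1) (q + k) := by
    refine (card_le_card fun j hj => ?_).trans (card_top_le_minusCount T 0 _ _)
    simp only [A, mem_filter, mem_range, not_lt] at hj ⊢
    refine ⟨hj.1.1, ?_, hk.topPos_lt_iff.2 (hk.lt_of_top_ne_barOne hj.1.1 (by simp [hj.1.2])),
      by simp [hj.1.2, csig]⟩
    rw [← topPos_of_lt hi]
    exact topPos_strictMono.monotone hj.2
  have hH : #(H.filter (i < ·)) < #(H.filter (¬ · < i)) := by
    refine card_lt_card ((ssubset_iff_of_subset fun j hj => ?_).2 ⟨i, by simp [H, hi, hb], ?_⟩)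
    · simp only [H, mem_filter, mem_range, not_lt] at hj ⊢
      exact ⟨hj.1, hj.2.le⟩
    · simp
  have htop : #{j ∈ range p | 2 * i + 1 ≤ topPos q j ∧ topPos q j < q + k ∧
      csig 0 (T.top j) = 1} ≤ #{j ∈ range p | T.top j = 2} := by
    refine card_le_card fun j hj => ?_
    simp only [mem_filter, mem_range] at hj ⊢
    refine ⟨hj.1, (eq_of_csig_zero_eq_one hj.2.2.2).resolve_right ?_⟩
    exact hk.top_ne_barOne_of_lt (hk.topPos_lt_iff.1 hj.2.2.1)
  have hbot : #{j ∈ range q | 2 * i + 1 ≤ 2 * j ∧ 2 * j < q + k ∧ csig 0 (T.bot j) = 1}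
      ≤ #(H.filter (i < ·)) := by
    refine card_le_card fun j hj => ?_
    simp only [H, mem_filter, mem_range] at hj ⊢
    refine ⟨⟨hj.1, (eq_of_csig_zero_eq_one hj.2.2.2).resolve_left fun h2 => ?_⟩, by omega⟩
    simp [T.bot_eq_barOne_of_le (show i ≤ j by omega) hj.1 hb] at h2
  have := plusCount_le_card_top_add_card_bot T 0 (2 * i + 1) (q + k)
    (by have := hk.le_p; omega)
  have := card_filter_add_card_filter_not (s := A) (· < i)
  have := card_filter_add_card_filter_not (s := H) (· < i)
  omega

lemma not_unmatchedPlus_zero_of_lt (hAB : Bstat T ≤ Astat T) (hk : T.IsBarOneCutoff k)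
    {m : ℕ} (hm : m < q + k) (hplus : csig 0 (cword T m) = 1) : ¬ unmatchedPlus T 0 m := by
  rcases exists_eq_two_mul_or_eq_topPos T.hq (m := m) (by have := hk.le_p; omega) with
    ⟨i, hi, rfl⟩ | ⟨i, hi, rfl⟩
  · rw [cword_two_mul T hi] at hplus
    rcases eq_of_csig_zero_eq_one hplus with hb | hb
    · exact not_unmatchedPlus_of_bot_eq_two hi hb
    · exact not_unmatchedPlus_of_bot_eq_barOne hAB hk hi hb
  · rw [cword_topPos] at hplus
    rcases eq_of_csig_zero_eq_one hplus with ht | ht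
    · exact not_unmatchedPlus_of_top_eq_two hAB hk hi ht
    · exact absurd ht (hk.top_ne_barOne_of_lt (hk.topPos_lt_iff.1 hm))

lemma unmatchedPlus_zero_cutoff (hk : T.IsBarOneCutoff k) (hkp : k < p) :
    unmatchedPlus T 0 (q + k) := by
  refine ⟨by omega, by simp [hk.cword_eq_barOne le_rfl (by omega), csig], fun j _ hj => ?_⟩
  have : minusCount T 0 (q + k + 1) (j + 1) = 0 := by
    refine card_eq_zero.2 (filter_eq_empty_iff.2 fun m hm => ?_)
    simp only [mem_Ico] at hm
    simp [hk.cword_eq_barOne (m := m) (by omega) (by omega), csig]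
  omega

lemma actsAt_zero_iff (hAB : Bstat T ≤ Astat T) (hk : T.IsBarOneCutoff k) {m : ℕ} :
    actsAt T 0 m ↔ k < p ∧ m = q + k := by
  constructor
  · rintro ⟨hun, hfirst⟩
    have hkm : q + k ≤ m := by
      by_contra! h
      exact not_unmatchedPlus_zero_of_lt hAB hk h hun.2.1 hun
    have hkp : k < p := by have := hun.1; omega
    refine ⟨hkp, (hkm.lt_or_eq.resolve_left fun h => ?_).symm⟩
    have hcut := unmatchedPlus_zero_cutoff hk hkp
    exact hfirst _ h hcut.2.1 hcut
  · rintro ⟨hkp, rfl⟩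
    exact ⟨unmatchedPlus_zero_cutoff hk hkp, fun m' hm' hplus =>
      not_unmatchedPlus_zero_of_lt hAB hk hm' hplus⟩

end FirstColor

section SecondColor

variable {p q : ℕ} {T U : C2Tab p q}

lemma exists_top_eq_of_cword_eq {m : ℕ}
    (h : ∀ m' < p + q, m' ≠ m → cword U m' = cword T m') :
    ∃ c, ∀ j < p, j ≠ c → U.top j = T.top j := by
  by_cases hc : ∃ c, topPos q c = m
  · obtain ⟨c, rfl⟩ := hc
    exact ⟨c, fun j hj hjc => by
      simpa [cword_topPos] using
        h _ (topPos_lt_add T.hq hj) (topPos_strictMono.injective.ne hjc)⟩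
  · simp only [not_exists] at hc
    exact ⟨0, fun j hj _ => by simpa [cword_topPos] using h _ (topPos_lt_add T.hq hj) (hc j)⟩

lemma cword_eq_iff_of_eRel_one (h : eRel 1 T U) {m : ℕ} {x : ℤ} (hm : m < p + q)
    (hx : x ≠ 2) (hx' : x ≠ -2) : cword U m = x ↔ cword T m = x := by
  obtain ⟨m₂, hact, hU₁, hU₂⟩ := h
  by_cases hmm : m = m₂
  · subst hmm
    rw [hU₁, raiseLetter_one, eq_of_csig_one_eq_one hact.1.2.1]
    exact ⟨fun h => (hx h.symm).elim, fun h => (hx' h.symm).elim⟩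
  · rw [hU₂ m hm hmm]

lemma C2Tab.IsBarOneCutoff.of_eRel_one {k : ℕ} (hk : T.IsBarOneCutoff k) (h : eRel 1 T U) :
    U.IsBarOneCutoff k where
  q_le := hk.q_le
  le_p := hk.le_p
  top_eq_barOne_iff j hj := by
    rw [← cword_topPos U j, cword_eq_iff_of_eRel_one h (topPos_lt_add T.hq hj) (by norm_num)
      (by norm_num), cword_topPos]
    exact hk.top_eq_barOne_iff j hj

lemma Bstat_le_Astat_of_eRel_one (hAB : Bstat T + 1 < Astat T) (h : eRel 1 T U) :
    Bstat U ≤ Astat U := by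
  obtain ⟨c, hc⟩ := exists_top_eq_of_cword_eq h.choose_spec.2.2
  have hbot : {j ∈ range q | U.bot j = -1} = {j ∈ range q | T.bot j = -1} :=
    filter_congr fun j hj => by
      rw [mem_range] at hj
      rw [← cword_two_mul U hj, ← cword_two_mul T hj,
        cword_eq_iff_of_eRel_one h (by have := T.hq; omega) (by norm_num) (by norm_num)]
  have htwo := card_filter_range_le_add_one 2 hc
  have hbarTwo := card_filter_range_le_add_one (-2) fun j hj hjc => (hc j hj hjc).symm
  unfold Astat Bstat at *
  rw [hbot]
  omega

end SecondColor

namespace C2Tab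

variable {p q : ℕ} {k : ℕ}

/-- The tableau `e₁ T`, when `e₁` acts on the first `1̄` of the top row. -/
def raiseBarOne (T : C2Tab p q) (hk : T.IsBarOneCutoff k) : C2Tab p q where
  hq := T.hq
  top j := if j = k then -2 else T.top j
  bot := T.bot
  htop i hi := by split_ifs <;> simp_all [T.htop i hi]
  hbot := T.hbot
  row_top i j hij hj := by
    split_ifs with hik hjk hjk
    · exact le_rfl
    · rw [(hk.top_eq_barOne_iff j hj).2 (by omega)]
      simp [cpos]
    · have := hk.top_ne_barOne_of_lt (show i < k by omega)
      rcases T.htop i (by omega) with h | h | h | h <;> simp_all [cpos]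
    · exact T.row_top i j hij hj
  row_bot := T.row_bot
  col_strict i hi := by
    rw [if_neg (by have := hk.q_le; omega)]
    exact T.col_strict i hi
  no_one_barone i hi := by
    rw [if_neg (by have := hk.q_le; omega)]
    exact T.no_one_barone i hi
  no_config i j hij hj := by
    split_ifs
    · simp
    · exact T.no_config i j hij hj

lemma cword_raiseBarOne (T : C2Tab p q) (hk : T.IsBarOneCutoff k) (m : ℕ) :
    cword (T.raiseBarOne hk) m = if m = q + k then -2 else cword T m := by
  have := hk.q_le
  unfold cword
  simp only [raiseBarOne]
  split_ifs <;> first | rfl | omega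

end C2Tab

section Commutation

variable {p q k : ℕ} {T U V : C2Tab p q}

lemma eRel_zero_raiseBarOne (hAB : Bstat T ≤ Astat T) (hk : T.IsBarOneCutoff k) (hkp : k < p) :
    eRel 0 T (T.raiseBarOne hk) :=
  ⟨q + k, (actsAt_zero_iff hAB hk).2 ⟨hkp, rfl⟩,
    by simp [C2Tab.cword_raiseBarOne, hk.cword_eq_barOne le_rfl (by omega), raiseLetter],
    fun m _ hm => by simp [C2Tab.cword_raiseBarOne, hm]⟩

lemma eRel_one_raiseBarOne (hAB : Bstat T ≤ Astat T) (hk : T.IsBarOneCutoff k)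
    (hkU : U.IsBarOneCutoff k) (hTU : eRel 1 T U) (hTV : eRel 0 T V) :
    eRel 1 V (U.raiseBarOne hkU) := by
  obtain ⟨m₁, hact₁, hV₁, hV₂⟩ := hTV
  obtain ⟨hkp, rfl⟩ := (actsAt_zero_iff hAB hk).1 hact₁
  obtain ⟨m₂, hact₂, hU₁, hU₂⟩ := hTU
  have hm₂ : m₂ < q + k := hk.lt_of_cword_ne_barOne hact₂.1.1 <| by
    rw [eq_of_csig_one_eq_one hact₂.1.2.1]
    norm_num
  have hVk : cword V (q + k) = -2 := by
    rw [hV₁, hk.cword_eq_barOne le_rfl hact₁.1.1]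
    rfl
  refine ⟨m₂, ?_, ?_, fun m hm hne => ?_⟩
  · -- `V` differs from `T` only at `q + k`, where the `e₂`-sign rises from `∗` (`1̄`) to `+` (`2̄`)
    refine actsAt_of_csig_le_right hact₂ (fun m hm => hV₂ m (by omega) (by omega))
      fun m hm₂m hm => ?_
    by_cases hmk : m = q + k
    · subst hmk
      simp [hVk, hk.cword_eq_barOne le_rfl hm, csig]
    · rw [hV₂ m hm hmk]
  · simp [C2Tab.cword_raiseBarOne, hm₂.ne, hU₁, raiseLetter_one]
  · by_cases hmk : m = q + k
    · simp [C2Tab.cword_raiseBarOne, hmk, hVk]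
    · simp [C2Tab.cword_raiseBarOne, hmk, hU₂ m hm hne, hV₂ m hm hmk]

end Commutation

/-- If `T` is a `C₂` tableau with `A(T) > B(T) + 1`, `e₁T ≠ 0` and
`e₂T ≠ 0`, then `e₁e₂T = e₂e₁T ≠ 0`. -/
theorem degree_two_relation_AgtB (p q : ℕ) (T : C2Tab p q)
    (hAB : Bstat T + 1 < Astat T)
    (h1 : ∃ U, eRel 0 T U) (h2 : ∃ U, eRel 1 T U) :
    ∃ (U V W W' : C2Tab p q),
      eRel 1 T U ∧ eRel 0 U W ∧ eRel 0 T V ∧ eRel 1 V W' ∧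
      ∀ m < p + q, cword W m = cword W' m := by
  obtain ⟨V, hTV⟩ := h1
  obtain ⟨U, hTU⟩ := h2
  obtain ⟨k, hk⟩ := T.exists_isBarOneCutoff
  have hTAB : Bstat T ≤ Astat T := by omega
  have hkp : k < p := ((actsAt_zero_iff hTAB hk).1 hTV.choose_spec.1).1
  have hkU := hk.of_eRel_one hTU
  exact ⟨U, V, _, _, hTU, eRel_zero_raiseBarOne (Bstat_le_Astat_of_eRel_one hAB hTU) hkU hkp,
    hTV, eRel_one_raiseBarOne hTAB hk hkU hTU hTV, fun _ _ => rfl⟩
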